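/- Let f : ℝⁿ → ℝ be convex and differentiable with L-Lipschitz gradient, let x* be a global minimizer of f, let 0 < t ≤ 1/L, and set y = x − t·∇f(x). Then f(y) − f(x*) ≤ (1/(2t))·(‖x − x*‖² − ‖y − x*‖²). -/

import Mathlib

/-!
Sufficient decrease: the quadratic upper bound coming from the `L`-Lipschitz gradient gives
`f y ≤ f x - (t/2)‖∇f x‖²` once `L t ≤ 1`. The gradient inequality of convexity gives
`f x - f x* ≤ ⟪∇f x, x - x*⟫`. Expanding `‖y - x*‖² = ‖x - x*‖² - 2t⟪∇f x, x - x*⟫ + t²‖∇f x‖²`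
shows that the sum of these two bounds is exactly the right-hand side.
-/

open Set AffineMap
open scoped RealInnerProductSpace

lemma le_add_add_half_of_hasDerivAt_le {φ φ' : ℝ → ℝ} {c K : ℝ}
    (hφ : ∀ s, HasDerivAt φ (φ' s) s) (hφ' : ∀ s ∈ Ico (0 : ℝ) 1, φ' s ≤ c + K * s) :
    φ 1 ≤ φ 0 + c + K / 2 := by
  have hB (s : ℝ) : HasDerivAt (fun s => φ 0 + s * c + K / 2 * s ^ 2) (c + K * s) s := by
    have hquad : HasDerivAt (fun s : ℝ => K / 2 * s ^ 2) (K * s) s :=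
      ((hasDerivAt_pow 2 s).const_mul (K / 2)).congr_deriv (by norm_num; ring)
    exact ((hasDerivAt_mul_const c).const_add (φ 0)).add hquad
  have := image_le_of_deriv_right_le_deriv_boundary
    (fun s _ => (hφ s).continuousAt.continuousWithinAt) (fun s _ => (hφ s).hasDerivWithinAt)
    (by simp) (fun s _ => (hB s).continuousAt.continuousWithinAt)
    (fun s _ => (hB s).hasDerivWithinAt) hφ' (right_mem_Icc.2 zero_le_one)
  simpa using this

variable {E : Type*} [NormedAddCommGroup E] [InnerProductSpace ℝ E]

lemma norm_sub_sq_sub_norm_sub_smul_sub_sq (x z g : E) (t : ℝ) :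
    ‖x - z‖ ^ 2 - ‖x - t • g - z‖ ^ 2 = 2 * t * ⟪g, x - z⟫ - t ^ 2 * ‖g‖ ^ 2 := by
  rw [sub_right_comm, norm_sub_sq_real (x - z), real_inner_smul_right, norm_smul, mul_pow,
    Real.norm_eq_abs, sq_abs, real_inner_comm]
  ring

variable [CompleteSpace E] {f : E → ℝ} {f' : E → E}

lemma HasGradientAt.hasDerivAt_comp_lineMap {g a b : E} {s : ℝ}
    (hf : HasGradientAt f g (lineMap a b s)) :
    HasDerivAt (f ∘ lineMap (k := ℝ) a b) ⟪g, b - a⟫ s := by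
  simpa using hf.hasFDerivAt.comp_hasDerivAt s hasDerivAt_lineMap

lemma ConvexOn.add_inner_gradient_le (hconv : ConvexOn ℝ univ f) {g a b : E}
    (hf : HasGradientAt f g a) : f a + ⟪g, b - a⟫ ≤ f b := by
  have hφ : ConvexOn ℝ univ (f ∘ lineMap (k := ℝ) a b) := hconv.comp_affineMap (lineMap a b)
  have hf0 : HasDerivAt (f ∘ lineMap (k := ℝ) a b) ⟪g, b - a⟫ 0 :=
    HasGradientAt.hasDerivAt_comp_lineMap (by simpa using hf)
  have := hφ.le_slope_of_hasDerivAt (mem_univ 0) (mem_univ 1) one_pos hf0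
  simp only [slope_def_field, Function.comp_apply, lineMap_apply_one, lineMap_apply_zero,
    sub_zero, div_one] at this
  linarith

lemma apply_le_add_inner_add_of_lipschitz_gradient (hf : ∀ x, HasGradientAt f (f' x) x)
    {L : ℝ} (hlip : ∀ x y, ‖f' x - f' y‖ ≤ L * ‖x - y‖) (a b : E) :
    f b ≤ f a + ⟪f' a, b - a⟫ + L / 2 * ‖b - a‖ ^ 2 := by
  have hderiv_le (s : ℝ) (hs : s ∈ Ico (0 : ℝ) 1) :
      ⟪f' (lineMap a b s), b - a⟫ ≤ ⟪f' a, b - a⟫ + L * ‖b - a‖ ^ 2 * s := by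
    have hdist : ‖lineMap a b s - a‖ = s * ‖b - a‖ := by
      rw [← dist_eq_norm, dist_lineMap_left, Real.norm_of_nonneg hs.1, dist_eq_norm']
    calc ⟪f' (lineMap a b s), b - a⟫
        = ⟪f' a, b - a⟫ + ⟪f' (lineMap a b s) - f' a, b - a⟫ := by rw [inner_sub_left]; ring
      _ ≤ ⟪f' a, b - a⟫ + ‖f' (lineMap a b s) - f' a‖ * ‖b - a‖ := by
        gcongr; exact real_inner_le_norm _ _
      _ ≤ ⟪f' a, b - a⟫ + L * ‖lineMap a b s - a‖ * ‖b - a‖ := by gcongr; exact hlip _ _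
      _ = ⟪f' a, b - a⟫ + L * ‖b - a‖ ^ 2 * s := by rw [hdist]; ring
  have := le_add_add_half_of_hasDerivAt_le
    (fun s => (hf (lineMap a b s)).hasDerivAt_comp_lineMap) hderiv_le
  simp only [Function.comp_apply, lineMap_apply_zero, lineMap_apply_one] at this
  linarith

lemma apply_gradient_step_le (hf : ∀ x, HasGradientAt f (f' x) x)
    {L : ℝ} (hlip : ∀ x y, ‖f' x - f' y‖ ≤ L * ‖x - y‖) {t : ℝ} (ht : 0 ≤ t) (htL : L * t ≤ 1)
    (x : E) : f (x - t • f' x) ≤ f x - t / 2 * ‖f' x‖ ^ 2 := by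
  have := apply_le_add_inner_add_of_lipschitz_gradient hf hlip x (x - t • f' x)
  rw [sub_sub_cancel_left, inner_neg_right, real_inner_smul_right, real_inner_self_eq_norm_sq,
    norm_neg, norm_smul, Real.norm_of_nonneg ht] at this
  nlinarith [mul_nonneg (mul_nonneg (sub_nonneg.2 htL) ht) (sq_nonneg ‖f' x‖)]

theorem gradient_step_progress_bound_general
    (n : ℕ) (f : EuclideanSpace ℝ (Fin n) → ℝ) (f' : EuclideanSpace ℝ (Fin n) → EuclideanSpace ℝ (Fin n))
    (hdiff : ∀ x, HasGradientAt f (f' x) x)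
    (hconv : ConvexOn ℝ Set.univ f)
    (L : ℝ) (hL : 0 < L)
    (hlip : ∀ x y, ‖f' x - f' y‖ ≤ L * ‖x - y‖)
    (xstar : EuclideanSpace ℝ (Fin n))
    (t : ℝ) (ht : 0 < t) (htL : t ≤ 1 / L)
    (x y : EuclideanSpace ℝ (Fin n)) (hy : y = x - t • f' x) :
    f y - f xstar ≤ (1 / (2 * t)) * (‖x - xstar‖ ^ 2 - ‖y - xstar‖ ^ 2) := by
  have hLt : L * t ≤ 1 := by rwa [le_div_iff₀ hL, mul_comm] at htL
  have hdecrease := apply_gradient_step_le hdiff hlip ht.le hLt x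
  have hconvex := hconv.add_inner_gradient_le (b := xstar) (hdiff x)
  have hinner : ⟪f' x, xstar - x⟫ = -⟪f' x, x - xstar⟫ := by
    rw [← inner_neg_right, neg_sub]
  have hrhs : 1 / (2 * t) * (‖x - xstar‖ ^ 2 - ‖x - t • f' x - xstar‖ ^ 2)
      = ⟪f' x, x - xstar⟫ - t / 2 * ‖f' x‖ ^ 2 := by
    rw [norm_sub_sq_sub_norm_sub_smul_sub_sq]
    field_simp
  rw [hy, hrhs]
  linarith

/-- One-step progress bound for gradient descent on a convex function with `L`-Lipschitz
gradient: `f y - f x* ≤ (1/(2t)) (‖x - x*‖² - ‖y - x*‖²)` where `y = x - t ∇f(x)`. -/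
theorem gradient_step_progress_bound
    (n : ℕ) (f : EuclideanSpace ℝ (Fin n) → ℝ) (f' : EuclideanSpace ℝ (Fin n) → EuclideanSpace ℝ (Fin n))
    (hdiff : ∀ x, HasGradientAt f (f' x) x)
    (hconv : ConvexOn ℝ Set.univ f)
    (L : ℝ) (hL : 0 < L)
    (hlip : ∀ x y, ‖f' x - f' y‖ ≤ L * ‖x - y‖)
    (xstar : EuclideanSpace ℝ (Fin n)) (hmin : ∀ x, f xstar ≤ f x)
    (t : ℝ) (ht : 0 < t) (htL : t ≤ 1 / L)
    (x y : EuclideanSpace ℝ (Fin n)) (hy : y = x - t • f' x) :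
    f y - f xstar ≤ (1 / (2 * t)) * (‖x - xstar‖ ^ 2 - ‖y - xstar‖ ^ 2) :=
  gradient_step_progress_bound_general n f f' hdiff hconv L hL hlip xstar t ht htL x y hy
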